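/- (Recovery foot placement.) Let ω > 0, let x_s, ẋ_s ∈ ℝ with ẋ_s > 0, and let the next foot be placed at x_foot,n ≥ x_s with ẋ_s > ω(x_foot,n − x_s) (the post-switch state lies above the asymptote of the new pendulum). Let y : ℝ → ℝ be the PIPM solution with y''(t) = ω²(y(t) − x_foot,n), y(0) = x_s, y'(0) = ẋ_s. Then there exists a unique t* ≥ 0 with y(t*) = x_foot,n, y'(t) > 0 for all t, and the CoM crosses the new stance foot with velocity y'(t*) = √(ẋ_s² − ω²(x_foot,n − x_s)²). In particular, choosing x_foot,n = x_s + (1/ω)·√(ẋ_s² − v²) for any 0 < v ≤ ẋ_s yields crossing (apex) velocity exactly v. -/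

import Mathlib

/-!
Along a solution of `y'' = ω² (y - c)` the two characteristic combinations `y' ± ω (y - c)`
evolve as `A e^{ωt}` and `B e^{-ωt}`. Above the asymptote both `A` and `B` are positive, so
`y' = (A e^{ωt} + B e^{-ωt}) / 2 > 0` and `y` is strictly increasing; the foot `c` is crossed
when `A e^{ωt} = B e^{-ωt}`, which happens at a nonnegative time because `A ≤ B` when the foot
lies ahead. The product of the two combinations is the conserved orbital energy
`y'² - ω² (y - c)²`, which pins down the crossing velocity.
-/

open Real

theorem eq_mul_exp_of_hasDerivAt_const_mul {f : ℝ → ℝ} {k : ℝ}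
    (hf : ∀ t, HasDerivAt f (k * f t) t) (t : ℝ) : f t = f 0 * exp (k * t) := by
  have hderiv : ∀ s, HasDerivAt (fun s => f s * exp (-(k * s))) 0 s := fun s => by
    have hexp : HasDerivAt (fun s => exp (-(k * s))) (exp (-(k * s)) * -k) s := by
      simpa using ((hasDerivAt_id s).const_mul k).neg.exp
    exact ((hf s).mul hexp).congr_deriv (by ring)
  have hconst : f t * exp (-(k * t)) = f 0 * exp (-(k * 0)) :=
    is_const_of_deriv_eq_zero (fun s => (hderiv s).differentiableAt)
      (fun s => (hderiv s).deriv) t 0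
  have hinv : exp (-(k * t)) * exp (k * t) = 1 := by rw [← exp_add]; simp
  calc f t = f t * exp (-(k * t)) * exp (k * t) := by rw [mul_assoc, hinv, mul_one]
    _ = f 0 * exp (k * t) := by rw [hconst]; simp

section PIPM

variable {ω c : ℝ} {y y' : ℝ → ℝ}

theorem pipm_add_mul_sub_eq_mul_exp {σ : ℝ} (hσ : σ ^ 2 = ω ^ 2)
    (hy : ∀ t, HasDerivAt y (y' t) t) (hy' : ∀ t, HasDerivAt y' (ω ^ 2 * (y t - c)) t)
    (t : ℝ) : y' t + σ * (y t - c) = (y' 0 + σ * (y 0 - c)) * exp (σ * t) :=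
  eq_mul_exp_of_hasDerivAt_const_mul (f := fun t => y' t + σ * (y t - c)) (fun s =>
    ((hy' s).add (((hy s).sub_const c).const_mul σ)).congr_deriv (by rw [← hσ]; ring)) t

theorem pipm_energy_eq (hy : ∀ t, HasDerivAt y (y' t) t)
    (hy' : ∀ t, HasDerivAt y' (ω ^ 2 * (y t - c)) t) (t : ℝ) :
    y' t ^ 2 - ω ^ 2 * (y t - c) ^ 2 = y' 0 ^ 2 - ω ^ 2 * (y 0 - c) ^ 2 := by
  have hplus := pipm_add_mul_sub_eq_mul_exp rfl hy hy' t
  have hminus := pipm_add_mul_sub_eq_mul_exp (σ := -ω) (by ring) hy hy' t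
  have hexp : exp (ω * t) * exp (-ω * t) = 1 := by rw [← exp_add]; simp
  linear_combination (y' t - ω * (y t - c)) * hplus +
    (y' 0 + ω * (y 0 - c)) * exp (ω * t) * hminus +
    (y' 0 + ω * (y 0 - c)) * (y' 0 - ω * (y 0 - c)) * hexp

end PIPM

theorem exists_nonneg_mul_exp_eq_mul_exp_neg {a b ω : ℝ} (ha : 0 < a) (hab : a ≤ b)
    (hω : 0 < ω) :
    ∃ t, 0 ≤ t ∧ a * exp (ω * t) = b * exp (-ω * t) := by
  have hb : 0 < b := ha.trans_le hab
  set t := log (b / a) / (2 * ω) with ht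
  refine ⟨t, div_nonneg (log_nonneg ((one_le_div ha).2 hab)) (by positivity), ?_⟩
  have hdouble : ω * t + ω * t = log (b / a) := by
    rw [ht]
    field_simp
    ring
  have hsq : exp (ω * t) * exp (ω * t) = b / a := by
    rw [← exp_add, hdouble, exp_log (div_pos hb ha)]
  rw [neg_mul, exp_neg, eq_mul_inv_iff_mul_eq₀ (exp_pos _).ne', mul_assoc, hsq]
  field_simp

theorem sqrt_sub_sq_of_eq_add_inv_mul_sqrt {ω u v x₀ x : ℝ} (hω : ω ≠ 0) (hv : 0 ≤ v)
    (hvu : v ≤ u) (hx : x = x₀ + (1 / ω) * √(u ^ 2 - v ^ 2)) :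
    √(u ^ 2 - ω ^ 2 * (x - x₀) ^ 2) = v := by
  have hnn : 0 ≤ u ^ 2 - v ^ 2 := by nlinarith
  have hdist : ω ^ 2 * (x - x₀) ^ 2 = u ^ 2 - v ^ 2 := by
    rw [hx, add_sub_cancel_left, mul_pow, sq_sqrt hnn]
    field_simp
  rw [hdist, sub_sub_cancel, sqrt_sq hv]

theorem recovery_foot_placement_general
    (ω xs xds xfn : ℝ) (hω : 0 < ω)
    (hfn : xs ≤ xfn) (hasym : ω * (xfn - xs) < xds)
    (y : ℝ → ℝ)
    (hdiff : ∀ t, DifferentiableAt ℝ y t)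
    (hdiff' : ∀ t, DifferentiableAt ℝ (deriv y) t)
    (hode : ∀ t, deriv (deriv y) t = ω ^ 2 * (y t - xfn))
    (h0 : y 0 = xs) (h0' : deriv y 0 = xds) :
    ∃ tstar : ℝ, 0 ≤ tstar ∧ y tstar = xfn ∧
      (∀ t : ℝ, 0 ≤ t → y t = xfn → t = tstar) ∧
      (∀ t : ℝ, 0 < deriv y t) ∧
      deriv y tstar = Real.sqrt (xds ^ 2 - ω ^ 2 * (xfn - xs) ^ 2) ∧
      (∀ v : ℝ, 0 < v → v ≤ xds →
        xfn = xs + (1 / ω) * Real.sqrt (xds ^ 2 - v ^ 2) →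
        deriv y tstar = v) := by
  have hy : ∀ t, HasDerivAt y (deriv y t) t := fun t => (hdiff t).hasDerivAt
  have hy' : ∀ t, HasDerivAt (deriv y) (ω ^ 2 * (y t - xfn)) t :=
    fun t => hode t ▸ (hdiff' t).hasDerivAt
  have hplus := pipm_add_mul_sub_eq_mul_exp rfl hy hy'
  have hminus := pipm_add_mul_sub_eq_mul_exp (σ := -ω) (by ring) hy hy'
  simp only [h0, h0'] at hplus hminus
  have hA : 0 < xds + ω * (xs - xfn) := by linarith
  have hAB : xds + ω * (xs - xfn) ≤ xds + -ω * (xs - xfn) := by nlinarith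
  have hpos : ∀ t, 0 < deriv y t := fun t => by
    linarith [hplus t, hminus t, mul_pos hA (exp_pos (ω * t)),
      mul_pos (hA.trans_le hAB) (exp_pos (-ω * t))]
  obtain ⟨tstar, htstar, hcross⟩ := exists_nonneg_mul_exp_eq_mul_exp_neg hA hAB hω
  have hytstar : y tstar = xfn := by
    have hzero : 2 * ω * (y tstar - xfn) = 0 := by
      linear_combination hplus tstar - hminus tstar + hcross
    simpa [hω.ne', sub_eq_zero] using hzero
  have hvel : deriv y tstar = √(xds ^ 2 - ω ^ 2 * (xfn - xs) ^ 2) := by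
    have henergy := pipm_energy_eq hy hy' tstar
    rw [hytstar, h0, h0'] at henergy
    rw [← sqrt_sq (hpos tstar).le]
    congr 1
    linear_combination henergy
  refine ⟨tstar, htstar, hytstar,
    fun t _ ht => (strictMono_of_deriv_pos hpos).injective (ht.trans hytstar.symm), hpos, hvel,
    fun v hv hvxds hxfn =>
      hvel.trans (sqrt_sub_sq_of_eq_add_inv_mul_sqrt hω.ne' hv.le hvxds hxfn)⟩

/-- Recovery foot placement: if the post-switch state lies
above the asymptote of the new pendulum, the CoM keeps moving forward and
crosses the new stance foot exactly once, at velocity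
`√(ẋ_s² − ω²(x_foot,n − x_s)²)`; in particular the capture-point-like choice
`x_foot,n = x_s + (1/ω)·√(ẋ_s² − v²)` yields crossing (apex) velocity `v`. -/
theorem recovery_foot_placement
    (ω xs xds xfn : ℝ) (hω : 0 < ω) (hxds : 0 < xds)
    (hfn : xs ≤ xfn) (hasym : ω * (xfn - xs) < xds)
    (y : ℝ → ℝ)
    (hdiff : ∀ t, DifferentiableAt ℝ y t)
    (hdiff' : ∀ t, DifferentiableAt ℝ (deriv y) t)
    (hode : ∀ t, deriv (deriv y) t = ω ^ 2 * (y t - xfn))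
    (h0 : y 0 = xs) (h0' : deriv y 0 = xds) :
    ∃ tstar : ℝ, 0 ≤ tstar ∧ y tstar = xfn ∧
      (∀ t : ℝ, 0 ≤ t → y t = xfn → t = tstar) ∧
      (∀ t : ℝ, 0 < deriv y t) ∧
      deriv y tstar = Real.sqrt (xds ^ 2 - ω ^ 2 * (xfn - xs) ^ 2) ∧
      (∀ v : ℝ, 0 < v → v ≤ xds →
        xfn = xs + (1 / ω) * Real.sqrt (xds ^ 2 - v ^ 2) →
        deriv y tstar = v) :=
  recovery_foot_placement_general ω xs xds xfn hω hfn hasym y hdiff hdiff' hode h0 h0'
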